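/- Let V be a finite nonempty type (the vocabulary), let t ≥ 1 be an integer, let u_j : V → ℝ for j = 1, …, t−1, let π' and π_{t−1} be full-support probability vectors on V, and let λ > 0 and η > 0. Consider the FTRL objective G(π) = ∑_{j=1}^{t−1} ( ∑_{a ∈ V} π(a)·u_j(a) − λ·KL(π‖π') ) − (1/η)·KL(π‖π_{t−1}) over probability vectors π on V. Then G has a unique maximizer π_t over probability vectors on V, given in closed form by π_t(a) = exp( (η·∑_{j=1}^{t−1} u_j(a) + (t−1)·λ·η·log π'(a) + log π_{t−1}(a)) / ((t−1)·λ·η + 1) ) / Z, where Z = ∑_{a' ∈ V} exp( (η·∑_{j=1}^{t−1} u_j(a') + (t−1)·λ·η·log π'(a') + log π_{t−1}(a')) / ((t−1)·λ·η + 1) ). -/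

import Mathlib

/-!
With `κ = (t - 1) λ + 1/η`, expanding both divergences shows that the objective is
`κ (⟪ρ, f⟫ + H(ρ))`, where `H` is the Shannon entropy and `f` is the exponent of the closed form.
By the Gibbs variational principle `⟪ρ, f⟫ + H(ρ) = log Z - KL(ρ ‖ softmax f)` on probability
vectors, so Gibbs' inequality makes `softmax f` the unique maximizer.
-/

open Finset Real

/-- Kullback–Leibler divergence between finitely supported probability vectors.
Terms with `p y = 0` vanish since `0 * log _ = 0`. -/
noncomputable def KL {Y : Type*} [Fintype Y] (p q : Y → ℝ) : ℝ :=
  ∑ y, p y * Real.log (p y / q y)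

open InformationTheory

section Divergence

variable {Y : Type*} [Fintype Y] {p q : Y → ℝ}

lemma mul_log_div_sub_add_eq_mul_klFun {a b : ℝ} (hb : 0 < b) :
    a * log (a / b) - a + b = b * klFun (a / b) := by
  rw [klFun_apply]
  field_simp
  ring

lemma KL_eq_sum_mul_klFun (hq : ∀ y, 0 < q y) (hpq : ∑ y, p y = ∑ y, q y) :
    KL p q = ∑ y, q y * klFun (p y / q y) := by
  have hsum : KL p q = ∑ y, (p y * log (p y / q y) - p y + q y) := by
    rw [sum_add_distrib, sum_sub_distrib, hpq, sub_add_cancel, KL]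
  simp only [hsum, mul_log_div_sub_add_eq_mul_klFun (hq _)]

theorem KL_nonneg (hp : ∀ y, 0 ≤ p y) (hq : ∀ y, 0 < q y) (hpq : ∑ y, p y = ∑ y, q y) :
    0 ≤ KL p q := by
  rw [KL_eq_sum_mul_klFun hq hpq]
  exact sum_nonneg fun y _ => mul_nonneg (hq y).le (klFun_nonneg (div_nonneg (hp y) (hq y).le))

theorem KL_eq_zero_iff (hp : ∀ y, 0 ≤ p y) (hq : ∀ y, 0 < q y) (hpq : ∑ y, p y = ∑ y, q y) :
    KL p q = 0 ↔ p = q := by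
  have hterm (y : Y) : 0 ≤ q y * klFun (p y / q y) :=
    mul_nonneg (hq y).le (klFun_nonneg (div_nonneg (hp y) (hq y).le))
  rw [KL_eq_sum_mul_klFun hq hpq, sum_eq_zero_iff_of_nonneg fun y _ => hterm y, funext_iff]
  refine forall_congr' fun y => ?_
  rw [mul_eq_zero, or_iff_right (hq y).ne', klFun_eq_zero_iff (div_nonneg (hp y) (hq y).le),
    div_eq_one_iff_eq (hq y).ne']
  simp

lemma KL_eq_neg_sum_negMulLog_sub (hq : ∀ y, q y ≠ 0) :
    KL p q = ∑ y, (-negMulLog (p y) - p y * log (q y)) := by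
  refine sum_congr rfl fun y _ => ?_
  rcases eq_or_ne (p y) 0 with hp | hp
  · simp [hp]
  · rw [log_div hp (hq y), negMulLog]
    ring

end Divergence

section Softmax

variable {Y : Type*} [Fintype Y]

noncomputable def softmax (f : Y → ℝ) (y : Y) : ℝ := exp (f y) / ∑ y', exp (f y')

noncomputable def entropyRegPayoff (f ρ : Y → ℝ) : ℝ := ∑ y, ρ y * f y + ∑ y, negMulLog (ρ y)

variable [Nonempty Y] (f : Y → ℝ)

lemma sum_exp_pos : 0 < ∑ y, exp (f y) :=
  sum_pos (fun y _ => exp_pos (f y)) univ_nonempty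

lemma softmax_pos (y : Y) : 0 < softmax f y :=
  div_pos (exp_pos _) (sum_exp_pos f)

lemma sum_softmax : ∑ y, softmax f y = 1 := by
  simp only [softmax, ← sum_div, div_self (sum_exp_pos f).ne']

lemma log_softmax (y : Y) : log (softmax f y) = f y - log (∑ y', exp (f y')) := by
  rw [softmax, log_div (exp_ne_zero _) (sum_exp_pos f).ne', log_exp]

variable {f} {ρ : Y → ℝ}

lemma entropyRegPayoff_eq_log_sum_exp_sub_KL (hρ : ∑ y, ρ y = 1) :
    entropyRegPayoff f ρ = log (∑ y, exp (f y)) - KL ρ (softmax f) := by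
  rw [entropyRegPayoff, KL_eq_neg_sum_negMulLog_sub fun y => (softmax_pos f y).ne']
  simp only [log_softmax, mul_sub, sum_sub_distrib, sum_neg_distrib, ← sum_mul, hρ]
  ring

theorem entropyRegPayoff_le_log_sum_exp (hρ₀ : ∀ y, 0 ≤ ρ y) (hρ : ∑ y, ρ y = 1) :
    entropyRegPayoff f ρ ≤ log (∑ y, exp (f y)) := by
  rw [entropyRegPayoff_eq_log_sum_exp_sub_KL hρ, sub_le_self_iff]
  exact KL_nonneg hρ₀ (softmax_pos f) (by rw [hρ, sum_softmax])

theorem entropyRegPayoff_eq_log_sum_exp_iff (hρ₀ : ∀ y, 0 ≤ ρ y) (hρ : ∑ y, ρ y = 1) :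
    entropyRegPayoff f ρ = log (∑ y, exp (f y)) ↔ ρ = softmax f := by
  rw [entropyRegPayoff_eq_log_sum_exp_sub_KL hρ, sub_eq_self]
  exact KL_eq_zero_iff hρ₀ (softmax_pos f) (by rw [hρ, sum_softmax])

end Softmax

lemma sum_mul_sub_mul_KL_sub_mul_KL {Y : Type*} [Fintype Y] (ρ U : Y → ℝ) {q₁ q₂ : Y → ℝ}
    (hq₁ : ∀ y, q₁ y ≠ 0) (hq₂ : ∀ y, q₂ y ≠ 0) {α β : ℝ} (hαβ : α + β ≠ 0) :
    ∑ y, ρ y * U y - α * KL ρ q₁ - β * KL ρ q₂ =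
      (α + β) * entropyRegPayoff
        (fun y => (U y + α * log (q₁ y) + β * log (q₂ y)) / (α + β)) ρ := by
  rw [entropyRegPayoff, KL_eq_neg_sum_negMulLog_sub hq₁, KL_eq_neg_sum_negMulLog_sub hq₂,
    ← sum_add_distrib, mul_sum, mul_sum, mul_sum, ← sum_sub_distrib, ← sum_sub_distrib]
  refine sum_congr rfl fun y _ => ?_
  field_simp
  ring

theorem ftrl_closed_form_general
    {V : Type*} [Fintype V] [Nonempty V]
    (t : ℕ) (ht : 1 ≤ t) (u : Fin (t - 1) → V → ℝ)
    (πa πprev : V → ℝ)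
    (hπa_pos : ∀ a, 0 < πa a)
    (hπprev_pos : ∀ a, 0 < πprev a)
    (lam η : ℝ) (hlam : 0 < lam) (hη : 0 < η)
    (G : (V → ℝ) → ℝ)
    (hG : ∀ ρ : V → ℝ, G ρ =
      (∑ j : Fin (t - 1), ((∑ a, ρ a * u j a) - lam * KL ρ πa)) - (1 / η) * KL ρ πprev)
    (Z : ℝ)
    (hZ : Z = ∑ a', Real.exp
      ((η * (∑ j, u j a') + ((t : ℝ) - 1) * lam * η * Real.log (πa a') + Real.log (πprev a')) /
        (((t : ℝ) - 1) * lam * η + 1)))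
    (πt : V → ℝ)
    (hπt : ∀ a, πt a = Real.exp
      ((η * (∑ j, u j a) + ((t : ℝ) - 1) * lam * η * Real.log (πa a) + Real.log (πprev a)) /
        (((t : ℝ) - 1) * lam * η + 1)) / Z) :
    ((∀ a, 0 ≤ πt a) ∧ ∑ a, πt a = 1) ∧
    (∀ ρ : V → ℝ, (∀ a, 0 ≤ ρ a) → ∑ a, ρ a = 1 →
      (G ρ ≤ G πt ∧ (G ρ = G πt ↔ ρ = πt))) := by
  set f : V → ℝ := fun a => (η * (∑ j, u j a) + ((t : ℝ) - 1) * lam * η * log (πa a) +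
    log (πprev a)) / (((t : ℝ) - 1) * lam * η + 1)
  obtain rfl : πt = softmax f := funext fun a => by rw [hπt, hZ]; rfl
  have hcard : ((t - 1 : ℕ) : ℝ) = t - 1 := by rw [Nat.cast_sub ht, Nat.cast_one]
  have ht₀ : (0 : ℝ) ≤ t - 1 := hcard ▸ (t - 1).cast_nonneg
  have hκ : 0 < (t - 1) * lam + 1 / η := by positivity
  have hc : 0 < (t - 1) * lam * η + 1 := by positivity
  have hG_eq (ρ : V → ℝ) : G ρ = ((t - 1) * lam + 1 / η) * entropyRegPayoff f ρ := by
    have hf : (fun a => (∑ j, u j a + (t - 1) * lam * log (πa a) + 1 / η * log (πprev a)) /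
        ((t - 1) * lam + 1 / η)) = f := by
      ext a
      simp only [f]
      field_simp
    rw [hG, sum_sub_distrib, sum_const, card_univ, Fintype.card_fin, nsmul_eq_mul, hcard,
      sum_comm, ← mul_assoc]
    simp_rw [← mul_sum]
    rw [sum_mul_sub_mul_KL_sub_mul_KL _ _ (fun a => (hπa_pos a).ne') (fun a => (hπprev_pos a).ne')
      hκ.ne', hf]
  have hmax := (entropyRegPayoff_eq_log_sum_exp_iff (fun a => (softmax_pos f a).le)
    (sum_softmax f)).mpr rfl
  refine ⟨⟨fun a => (softmax_pos f a).le, sum_softmax f⟩, fun ρ hρ₀ hρ => ?_⟩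
  rw [hG_eq, hG_eq, hmax, mul_le_mul_iff_right₀ hκ, mul_right_inj' hκ.ne']
  exact ⟨entropyRegPayoff_le_log_sum_exp hρ₀ hρ, entropyRegPayoff_eq_log_sum_exp_iff hρ₀ hρ⟩

/-- The FTRL objective
`G(π) = ∑_{j=1}^{t−1} (∑_a π a * u j a − λ KL(π‖πa)) − (1/η) KL(π‖π_{t−1})`
has the stated softmax closed form as its unique maximizer over probability vectors. -/
theorem ftrl_closed_form
    {V : Type*} [Fintype V] [Nonempty V]
    (t : ℕ) (ht : 1 ≤ t) (u : Fin (t - 1) → V → ℝ)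
    (πa πprev : V → ℝ)
    (hπa_pos : ∀ a, 0 < πa a) (hπa_sum : ∑ a, πa a = 1)
    (hπprev_pos : ∀ a, 0 < πprev a) (hπprev_sum : ∑ a, πprev a = 1)
    (lam η : ℝ) (hlam : 0 < lam) (hη : 0 < η)
    (G : (V → ℝ) → ℝ)
    (hG : ∀ ρ : V → ℝ, G ρ =
      (∑ j : Fin (t - 1), ((∑ a, ρ a * u j a) - lam * KL ρ πa)) - (1 / η) * KL ρ πprev)
    (Z : ℝ)
    (hZ : Z = ∑ a', Real.exp
      ((η * (∑ j, u j a') + ((t : ℝ) - 1) * lam * η * Real.log (πa a') + Real.log (πprev a')) /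
        (((t : ℝ) - 1) * lam * η + 1)))
    (πt : V → ℝ)
    (hπt : ∀ a, πt a = Real.exp
      ((η * (∑ j, u j a) + ((t : ℝ) - 1) * lam * η * Real.log (πa a) + Real.log (πprev a)) /
        (((t : ℝ) - 1) * lam * η + 1)) / Z) :
    ((∀ a, 0 ≤ πt a) ∧ ∑ a, πt a = 1) ∧
    (∀ ρ : V → ℝ, (∀ a, 0 ≤ ρ a) → ∑ a, ρ a = 1 →
      (G ρ ≤ G πt ∧ (G ρ = G πt ↔ ρ = πt))) :=
  ftrl_closed_form_general t ht u πa πprev hπa_pos hπprev_pos lam η hlam hη G hG Z hZ πt hπt
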